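/- For d ≥ 0 let a(d) be the number of closed Mockingbird terms of degree d that are maximal elements for ≼ (i.e., the only term t' with t ⇒ t' is t itself). Then a(0) = 1, a(1) = 1, and for all d ≥ 2, a(d) = Σ_{i=0}^{d−2} a(i)·a(d−1−i). -/

import Mathlib

/-- Mockingbird terms: the constant `M`, variables `x i`, and applications. -/
inductive MTerm : Type
  | M : MTerm
  | var : ℕ → MTerm
  | app : MTerm → MTerm → MTerm
  deriving DecidableEq

/-- The one-step rewrite relation `⇒` on Mockingbird terms. -/
inductive Step : MTerm → MTerm → Prop
  | mock (t : MTerm) : Step (MTerm.app MTerm.M t) (MTerm.app t t)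
  | left {t1 t1' : MTerm} (t2 : MTerm) :
      Step t1 t1' → Step (MTerm.app t1 t2) (MTerm.app t1' t2)
  | right (t1 : MTerm) {t2 t2' : MTerm} :
      Step t2 t2' → Step (MTerm.app t1 t2) (MTerm.app t1 t2')

/-- `≼`, the reflexive-transitive closure of `⇒`. -/
def MLe : MTerm → MTerm → Prop := Relation.ReflTransGen Step

/-- `≡`, the reflexive-symmetric-transitive closure of `⇒`. -/
def MEquiv : MTerm → MTerm → Prop := Relation.EqvGen Step

/-- Strict version of `≼`. -/
def MLt (s t : MTerm) : Prop := MLe s t ∧ s ≠ t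

/-- Covering relation for `≼`. -/
def MCovBy (s t : MTerm) : Prop := MLt s t ∧ ∀ z, MLt s z → ¬ MLt z t

/-- Duplicative trees: white or black nodes with a list (forest) of children. -/
inductive DTree : Type
  | W : List DTree → DTree
  | B : List DTree → DTree

/-- The one-step relation `⋖` on duplicative forests. -/
inductive DStep : List DTree → List DTree → Prop
  | dup (g : List DTree) : DStep [DTree.W g] [DTree.B (g ++ g)]
  | white {g g' : List DTree} : DStep g g' → DStep [DTree.W g] [DTree.W g']
  | black {g g' : List DTree} : DStep g g' → DStep [DTree.B g] [DTree.B g']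
  | head {t t' : DTree} (f : List DTree) : DStep [t] [t'] → DStep (t :: f) (t' :: f)
  | tail (t : DTree) {f f' : List DTree} : DStep f f' → DStep (t :: f) (t :: f')

/-- `≪`, the reflexive-transitive closure of `⋖`. -/
def DLe : List DTree → List DTree → Prop := Relation.ReflTransGen DStep

/-- The map `fr` from Mockingbird terms to duplicative forests. -/
def fr : MTerm → List DTree
  | MTerm.M => []
  | MTerm.var _ => []
  | MTerm.app MTerm.M MTerm.M => [DTree.B []]
  | MTerm.app MTerm.M t' => [DTree.W (fr t')]
  | MTerm.app t t' => [DTree.B (fr t ++ fr t')]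

mutual
  /-- The pruning map on duplicative trees (returns a forest). -/
  def prT : DTree → List DTree
    | DTree.W g => [DTree.W (prF g)]
    | DTree.B g => prF g
  /-- The pruning map on duplicative forests. -/
  def prF : List DTree → List DTree
    | [] => []
    | t :: f => prT t ++ prF f
end

mutual
  /-- The statistic `mtStat` on duplicative trees. -/
  def mtStat : DTree → ℕ
    | DTree.W g => 2 * ml g
    | DTree.B g => ml g
  /-- Sum of `mtStat` over the trees of a forest. -/
  def mtsum : List DTree → ℕ
    | [] => 0
    | t :: f => mtStat t + mtsum f
  /-- The statistic `ml` on duplicative forests: `1 - ℓ + Σ mtStat`. -/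
  def ml : List DTree → ℕ
    | f => mtsum f + 1 - f.length
end

mutual
  /-- Number of white nodes in a duplicative tree. -/
  def whitesT : DTree → ℕ
    | DTree.W g => 1 + whitesF g
    | DTree.B g => whitesF g
  /-- Number of white nodes in a duplicative forest. -/
  def whitesF : List DTree → ℕ
    | [] => 0
    | t :: f => whitesT t + whitesF f
end

/-- Closed terms: no variables. -/
def MClosed : MTerm → Prop
  | MTerm.M => True
  | MTerm.var _ => False
  | MTerm.app a b => MClosed a ∧ MClosed b

/-- Degree: number of applications. -/
def deg : MTerm → ℕ
  | MTerm.M => 0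
  | MTerm.var _ => 0
  | MTerm.app a b => deg a + deg b + 1

/-- Subterm relation. -/
inductive Subterm : MTerm → MTerm → Prop
  | refl (t : MTerm) : Subterm t t
  | left {s a : MTerm} (b : MTerm) : Subterm s a → Subterm s (MTerm.app a b)
  | right (a : MTerm) {s b : MTerm} : Subterm s b → Subterm s (MTerm.app a b)

/-- The term `r_d`. -/
def rTerm : ℕ → MTerm
  | 0 => MTerm.M
  | d + 1 => MTerm.app MTerm.M (rTerm d)

/-- Saturated chain from `a` to `b`, given as the list of its elements. -/
def SatChain (a b : MTerm) (c : List MTerm) : Prop :=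
  List.Chain' MCovBy c ∧ c.head? = some a ∧ c.getLast? = some b


def MMaximal (t : MTerm) : Prop := ∀ t', Step t t' → t' = t

theorem mMaximal_M : MMaximal MTerm.M := fun _ h => nomatch h

theorem mMaximal_app_iff {u v : MTerm} :
    MMaximal (MTerm.app u v) ↔ MMaximal u ∧ MMaximal v ∧ (u = MTerm.M → v = MTerm.M) := by
  constructor
  · intro h
    refine ⟨fun u' hu => ?_, fun v' hv => ?_, ?_⟩
    · exact (MTerm.app.inj (h _ (Step.left v hu))).1
    · exact (MTerm.app.inj (h _ (Step.right u hv))).2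
    · rintro rfl
      exact (MTerm.app.inj (h _ (Step.mock v))).1
  · rintro ⟨hu, hv, hM⟩ t' hs
    cases hs with
    | mock => rw [hM rfl]
    | left _ h => rw [hu _ h]
    | right _ h => rw [hv _ h]

theorem eq_M_of_closed_of_deg_eq_zero {t : MTerm} (hc : MClosed t) (hd : deg t = 0) :
    t = MTerm.M := by
  cases t with
  | M => rfl
  | var => exact hc.elim
  | app => simp [deg] at hd

def maxClosed (d : ℕ) : Set MTerm := {t | MClosed t ∧ deg t = d ∧ MMaximal t}

theorem maxClosed_zero : maxClosed 0 = {MTerm.M} := by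
  ext t
  constructor
  · rintro ⟨hc, hd, -⟩
    exact eq_M_of_closed_of_deg_eq_zero hc hd
  · rintro rfl
    exact ⟨trivial, rfl, mMaximal_M⟩

theorem maxClosed_one : maxClosed 1 = {MTerm.app MTerm.M MTerm.M} := by
  ext t
  constructor
  · rintro ⟨hc, hd, -⟩
    cases t with
    | M => simp [deg] at hd
    | var => exact hc.elim
    | app u v =>
      simp only [deg, Nat.add_eq_right, Nat.add_eq_zero_iff] at hd
      rw [eq_M_of_closed_of_deg_eq_zero hc.1 hd.1, eq_M_of_closed_of_deg_eq_zero hc.2 hd.2]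
      rfl
  · rintro rfl
    exact ⟨⟨trivial, trivial⟩, rfl,
      mMaximal_app_iff.2 ⟨mMaximal_M, mMaximal_M, fun _ => rfl⟩⟩

/-- Sorting by the degree `i` of the argument: the head then has degree `d - i ≥ 1`, so it is
not `M`, and any maximal argument is allowed. -/
theorem maxClosed_succ {d : ℕ} (hd : 1 ≤ d) :
    maxClosed (d + 1) =
      ⋃ i ∈ Set.Iio d, Set.image2 MTerm.app (maxClosed (d - i)) (maxClosed i) := by
  ext t
  simp only [Set.mem_iUnion, Set.mem_image2, Set.mem_Iio, exists_prop]
  constructor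
  · rintro ⟨hc, hdeg, hmax⟩
    cases t with
    | M => simp [deg] at hdeg
    | var => exact hc.elim
    | app u v =>
      obtain ⟨hu, hv, hM⟩ := mMaximal_app_iff.1 hmax
      simp only [deg, Nat.add_right_cancel_iff] at hdeg
      have hu_pos : deg u ≠ 0 := by
        intro h
        have := eq_M_of_closed_of_deg_eq_zero hc.1 h
        rw [this, hM this, deg] at hdeg
        omega
      exact ⟨deg v, by omega, u, ⟨hc.1, by omega, hu⟩, v, ⟨hc.2, rfl, hv⟩, rfl⟩
  · rintro ⟨i, hi, u, ⟨hcu, hdu, hu⟩, v, ⟨hcv, hdv, hv⟩, rfl⟩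
    refine ⟨⟨hcu, hcv⟩, by simp only [deg]; omega, mMaximal_app_iff.2 ⟨hu, hv, ?_⟩⟩
    rintro rfl
    rw [deg] at hdu
    omega

theorem finite_maxClosed : ∀ d, (maxClosed d).Finite
  | 0 => maxClosed_zero ▸ Set.finite_singleton _
  | 1 => maxClosed_one ▸ Set.finite_singleton _
  | d + 2 => by
    rw [maxClosed_succ (by omega)]
    exact (Set.finite_Iio _).biUnion fun i _ =>
      (finite_maxClosed _).image2 _ (finite_maxClosed _)
decreasing_by all_goals (rw [Set.mem_Iio] at *; omega)

theorem ncard_maxClosed_succ {d : ℕ} (hd : 1 ≤ d) :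
    (maxClosed (d + 1)).ncard =
      ∑ i ∈ Finset.range d, (maxClosed (d - i)).ncard * (maxClosed i).ncard := by
  have app_injective : Function.Injective fun p : MTerm × MTerm => MTerm.app p.1 p.2 :=
    fun p q h => Prod.ext (MTerm.app.inj h).1 (MTerm.app.inj h).2
  have disjoint : (Set.Iio d).PairwiseDisjoint
      fun i => Set.image2 MTerm.app (maxClosed (d - i)) (maxClosed i) := by
    rintro i - j - hij
    refine Set.disjoint_left.2 ?_
    rintro _ ⟨u, -, v, ⟨-, hv, -⟩, rfl⟩ ⟨u', -, v', ⟨-, hv', -⟩, h⟩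
    exact hij (hv.symm.trans ((MTerm.app.inj h).2 ▸ hv'))
  rw [maxClosed_succ hd, (Set.finite_Iio d).ncard_biUnion
    (fun i _ => (finite_maxClosed _).image2 _ (finite_maxClosed _)) disjoint,
    ← Finset.coe_range, finsum_mem_coe_finset]
  refine Finset.sum_congr rfl fun i _ => ?_
  rw [← Set.image_prod, Set.ncard_image_of_injective _ app_injective, Set.ncard_prod]

/-- recurrence for the number `a d` of closed maximal terms of degree `d`. -/
theorem count_maximal_closed_terms (a : ℕ → ℕ)
    (ha : ∀ d, a d =
      Set.ncard {t : MTerm | MClosed t ∧ deg t = d ∧ ∀ t', Step t t' → t' = t}) :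
    a 0 = 1 ∧ a 1 = 1 ∧
    ∀ d, 2 ≤ d → a d = ∑ i ∈ Finset.range (d - 1), a i * a (d - 1 - i) := by
  have ha_ncard : ∀ d, a d = (maxClosed d).ncard := ha
  refine ⟨by rw [ha_ncard, maxClosed_zero, Set.ncard_singleton],
    by rw [ha_ncard, maxClosed_one, Set.ncard_singleton], fun d hd => ?_⟩
  obtain ⟨e, rfl⟩ : ∃ e, d = e + 1 := ⟨d - 1, by omega⟩
  rw [ha_ncard, ncard_maxClosed_succ (by omega), Nat.add_sub_cancel]
  simp only [ha_ncard, mul_comm]
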